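/- Assume d1 = d2, and suppose there are constants δ, Δ, L > 0 and ρ, β ≥ 0 such that for every x ∈ ℝ^d: every singular value of the cross-derivative block ∇²_{x1,x2} g(x) lies in [δ, Δ] (in particular this square matrix is invertible); the spectral norms of the symmetric blocks ∇²_{x1,x1} g(x) and ∇²_{x2,x2} g(x) are at most L; and λ_min((∇²_{x1,x1} g(x))²) ≥ ρ² and λ_min((∇²_{x2,x2} g(x))²) ≥ β². If the 'sufficiently bilinear' condition (δ² + ρ²)(δ² + β²) − 4L²Δ² > 0 holds, then the Hamiltonian satisfies the Polyak–Łojasiewicz inequality ½‖∇H(x)‖² ≥ μ_H · H(x) for all x ∈ ℝ^d, with μ_H = ((δ² + ρ²)(δ² + β²) − 4L²Δ²)/(2δ² + ρ² + β²). -/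

import Mathlib

/-!
With `u = ∇_{x1} g`, `v = ∇_{x2} g` and `A, C, B` the blocks `∇²_{x1,x1} g, ∇²_{x1,x2} g,
∇²_{x2,x2} g`, we have `H = ½ (‖u‖² + ‖v‖²)` and `∇H = ∇²g ∇g = (A u + C v, Cᵀ u + B v)`.
The transpose `Cᵀ` has the same singular value bounds `[δ, Δ]` as `C`, so the reverse triangle
inequality gives `‖∇H‖² ≥ (δ² + ρ²) ‖u‖² + (δ² + β²) ‖v‖² - 4 L Δ ‖u‖ ‖v‖`. The smallest
eigenvalue of this quadratic form in `(‖u‖, ‖v‖)` is at least its determinant over its trace,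
which is `μ_H`.
-/

open scoped RealInnerProductSpace BigOperators

noncomputable section

variable {d : ℕ}

/-- The signed gradient field ξ(x) = (∇_{x1} g(x), −∇_{x2} g(x)). -/
def xi (g : EuclideanSpace ℝ (Fin d ⊕ Fin d) → ℝ)
    (x : EuclideanSpace ℝ (Fin d ⊕ Fin d)) : EuclideanSpace ℝ (Fin d ⊕ Fin d) :=
  (WithLp.equiv 2 _).symm (Sum.elim
    (fun a => gradient g x (Sum.inl a))
    (fun j => -(gradient g x (Sum.inr j))))

def Ham (g : EuclideanSpace ℝ (Fin d ⊕ Fin d) → ℝ)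
    (x : EuclideanSpace ℝ (Fin d ⊕ Fin d)) : ℝ :=
  (1 / 2 : ℝ) * ‖xi g x‖ ^ 2

def hessEntry (g : EuclideanSpace ℝ (Fin d ⊕ Fin d) → ℝ)
    (x : EuclideanSpace ℝ (Fin d ⊕ Fin d)) (k l : Fin d ⊕ Fin d) : ℝ :=
  iteratedFDeriv ℝ 2 g x ![EuclideanSpace.single k 1, EuclideanSpace.single l 1]

/-- The block ∇²_{x1,x1} g(x). -/
def hess11 (g : EuclideanSpace ℝ (Fin d ⊕ Fin d) → ℝ)
    (x : EuclideanSpace ℝ (Fin d ⊕ Fin d)) : Matrix (Fin d) (Fin d) ℝ :=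
  Matrix.of fun a b => hessEntry g x (Sum.inl a) (Sum.inl b)

/-- The cross block ∇²_{x1,x2} g(x). -/
def hess12 (g : EuclideanSpace ℝ (Fin d ⊕ Fin d) → ℝ)
    (x : EuclideanSpace ℝ (Fin d ⊕ Fin d)) : Matrix (Fin d) (Fin d) ℝ :=
  Matrix.of fun a b => hessEntry g x (Sum.inl a) (Sum.inr b)

/-- The block ∇²_{x2,x2} g(x). -/
def hess22 (g : EuclideanSpace ℝ (Fin d ⊕ Fin d) → ℝ)
    (x : EuclideanSpace ℝ (Fin d ⊕ Fin d)) : Matrix (Fin d) (Fin d) ℝ :=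
  Matrix.of fun a b => hessEntry g x (Sum.inr a) (Sum.inr b)

section Adjoint

variable {E : Type*} [NormedAddCommGroup E] [InnerProductSpace ℝ E] [FiniteDimensional ℝ E]

theorem LinearMap.norm_adjoint_apply_le {T : E →ₗ[ℝ] E} {C : ℝ} (hT : ∀ v, ‖T v‖ ≤ C * ‖v‖)
    (u : E) : ‖T.adjoint u‖ ≤ C * ‖u‖ := by
  have hCu : 0 ≤ C * ‖u‖ := (norm_nonneg _).trans (hT u)
  have : ‖T.adjoint u‖ ^ 2 ≤ C * ‖u‖ * ‖T.adjoint u‖ :=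
    calc ‖T.adjoint u‖ ^ 2 = ⟪u, T (T.adjoint u)⟫ := by
          rw [← LinearMap.adjoint_inner_left, real_inner_self_eq_norm_sq]
      _ ≤ ‖u‖ * (C * ‖T.adjoint u‖) :=
          (real_inner_le_norm _ _).trans (mul_le_mul_of_nonneg_left (hT _) (norm_nonneg u))
      _ = C * ‖u‖ * ‖T.adjoint u‖ := by ring
  nlinarith [norm_nonneg (T.adjoint u)]

theorem LinearMap.le_norm_adjoint_apply {T : E →ₗ[ℝ] E} {c : ℝ} (hc : 0 < c)
    (hT : ∀ v, c * ‖v‖ ≤ ‖T v‖) (u : E) : c * ‖u‖ ≤ ‖T.adjoint u‖ := by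
  have hinj : Function.Injective T := by
    refine (injective_iff_map_eq_zero T).2 fun v hv => norm_le_zero_iff.1 ?_
    have := hT v
    rw [hv, norm_zero] at this
    nlinarith [norm_nonneg v]
  obtain ⟨w, rfl⟩ := LinearMap.injective_iff_surjective.1 hinj u
  have : ‖T w‖ ^ 2 ≤ ‖T.adjoint (T w)‖ * ‖w‖ :=
    calc ‖T w‖ ^ 2 = ⟪T.adjoint (T w), w⟫ := by
          rw [LinearMap.adjoint_inner_left, real_inner_self_eq_norm_sq]
      _ ≤ _ := real_inner_le_norm _ _
  have hcw := mul_le_mul_of_nonneg_left (hT w) (norm_nonneg (T.adjoint (T w)))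
  rcases (norm_nonneg (T w)).eq_or_lt with h0 | hpos
  · rw [← h0, mul_zero]; exact norm_nonneg _
  · refine le_of_mul_le_mul_right ?_ hpos
    nlinarith

end Adjoint

open Matrix in
theorem Matrix.toEuclideanLin_transpose {n : Type*} [Fintype n] [DecidableEq n]
    (M : Matrix n n ℝ) : Matrix.toEuclideanLin Mᵀ = (Matrix.toEuclideanLin M).adjoint := by
  rw [← Matrix.conjTranspose_eq_transpose_of_trivial, Matrix.toEuclideanLin_conjTranspose_eq_adjoint]

theorem sq_add_sq_sub_two_mul_le_norm_add_sq {E : Type*} [SeminormedAddCommGroup E] {x y : E}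
    {p P q Q : ℝ} (hp : 0 ≤ p) (hq : 0 ≤ q) (hpx : p ≤ ‖x‖) (hxP : ‖x‖ ≤ P) (hqy : q ≤ ‖y‖)
    (hyQ : ‖y‖ ≤ Q) : p ^ 2 + q ^ 2 - 2 * P * Q ≤ ‖x + y‖ ^ 2 := by
  have h := abs_norm_sub_norm_le x (-y)
  rw [sub_neg_eq_add, norm_neg] at h
  have h2 : (‖x‖ - ‖y‖) ^ 2 ≤ ‖x + y‖ ^ 2 := sq_le_sq' (abs_le.1 h).1 (abs_le.1 h).2
  nlinarith [mul_le_mul hxP hyQ (norm_nonneg y) ((norm_nonneg x).trans hxP),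
    pow_le_pow_left₀ hp hpx 2, pow_le_pow_left₀ hq hqy 2]

/-- `(a b - c²) / (a + b)` bounds below the smallest eigenvalue of `!![a, -c; -c, b]`: the
difference of the two sides, times `a + b`, is `(a s - c t)² + (c s - b t)²`. -/
theorem div_mul_sq_add_sq_le {a b c : ℝ} (hab : 0 < a + b) (s t : ℝ) :
    (a * b - c ^ 2) / (a + b) * (s ^ 2 + t ^ 2) ≤ a * s ^ 2 + b * t ^ 2 - 2 * c * (s * t) := by
  rw [div_mul_eq_mul_div, div_le_iff₀ hab]
  nlinarith [sq_nonneg (a * s - c * t), sq_nonneg (c * s - b * t)]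

theorem inner_gradient_half_sq_norm_gradient {E : Type*} [NormedAddCommGroup E]
    [InnerProductSpace ℝ E] [CompleteSpace E] {f : E → ℝ} {x : E} (hf : ContDiffAt ℝ 2 f x)
    (w : E) :
    ⟪gradient (fun y => (1 / 2 : ℝ) * ‖gradient f y‖ ^ 2) x, w⟫ =
      fderiv ℝ (fderiv ℝ f) x w (gradient f x) := by
  set e := (InnerProductSpace.toDual ℝ E).symm.toContinuousLinearEquiv.toContinuousLinearMap
  have hgrad : HasFDerivAt (gradient f) (e.comp (fderiv ℝ (fderiv ℝ f) x)) x := by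
    have hD : DifferentiableAt ℝ (fderiv ℝ f) x :=
      (hf.fderiv_right (m := 1) le_rfl).differentiableAt one_ne_zero
    exact e.hasFDerivAt.comp x hD.hasFDerivAt
  rw [gradient, ((hgrad.norm_sq).const_mul (1 / 2 : ℝ)).fderiv, InnerProductSpace.toDual_symm_apply]
  simp only [e, gradient, smul_apply, ContinuousLinearMap.comp_apply,
    innerSL_apply_apply, ContinuousLinearEquiv.coe_coe, LinearIsometryEquiv.coe_toContinuousLinearEquiv]
  rw [real_inner_comm, InnerProductSpace.toDual_symm_apply]
  ring

open Matrix

section Blocks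

variable {ι κ : Type*} [Fintype ι] [Fintype κ]

def inlPart (w : EuclideanSpace ℝ (ι ⊕ κ)) : EuclideanSpace ℝ ι :=
  WithLp.toLp 2 fun i => w (Sum.inl i)

def inrPart (w : EuclideanSpace ℝ (ι ⊕ κ)) : EuclideanSpace ℝ κ :=
  WithLp.toLp 2 fun j => w (Sum.inr j)

theorem sq_norm_eq_inlPart_add_inrPart (w : EuclideanSpace ℝ (ι ⊕ κ)) :
    ‖w‖ ^ 2 = ‖inlPart w‖ ^ 2 + ‖inrPart w‖ ^ 2 := by
  simp only [EuclideanSpace.norm_sq_eq, Fintype.sum_sum_type, inlPart, inrPart]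

end Blocks

theorem EuclideanSpace.apply_eq_sum_mul {ι : Type*} [Fintype ι] [DecidableEq ι]
    (φ : EuclideanSpace ℝ ι →L[ℝ] ℝ) (v : EuclideanSpace ℝ ι) :
    φ v = ∑ l, v l * φ (EuclideanSpace.single l 1) := by
  conv_lhs => rw [← (EuclideanSpace.basisFun ι ℝ).sum_repr v]
  simp [map_sum, EuclideanSpace.basisFun_apply, EuclideanSpace.basisFun_repr, smul_eq_mul]

section Hamiltonian

variable {g : EuclideanSpace ℝ (Fin d ⊕ Fin d) → ℝ} {x : EuclideanSpace ℝ (Fin d ⊕ Fin d)}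

theorem sq_norm_xi : ‖xi g x‖ ^ 2 = ‖gradient g x‖ ^ 2 := by
  simp [EuclideanSpace.norm_sq_eq, Fintype.sum_sum_type, xi]

theorem ham_eq_half_sq_norm_gradient (g : EuclideanSpace ℝ (Fin d ⊕ Fin d) → ℝ) :
    Ham g = fun y => (1 / 2 : ℝ) * ‖gradient g y‖ ^ 2 := by
  funext y
  rw [Ham, sq_norm_xi]

theorem hessEntry_comm (hg : ContDiffAt ℝ 2 g x) (k l : Fin d ⊕ Fin d) :
    hessEntry g x k l = hessEntry g x l k := by
  simpa [hessEntry, iteratedFDeriv_two_apply] using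
    hg.isSymmSndFDerivAt (by simp) (EuclideanSpace.single k 1) (EuclideanSpace.single l 1)

theorem gradient_ham_apply (hg : ContDiffAt ℝ 2 g x) (k : Fin d ⊕ Fin d) :
    gradient (Ham g) x k = ∑ l, hessEntry g x k l * gradient g x l := by
  have hk : gradient (Ham g) x k = ⟪gradient (Ham g) x, EuclideanSpace.single k 1⟫ := by
    rw [EuclideanSpace.inner_single_right, one_mul, conj_trivial]
  rw [hk, ham_eq_half_sq_norm_gradient, inner_gradient_half_sq_norm_gradient hg,
    EuclideanSpace.apply_eq_sum_mul]
  simp [hessEntry, iteratedFDeriv_two_apply, mul_comm]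

theorem inlPart_gradient_ham (hg : ContDiffAt ℝ 2 g x) :
    inlPart (gradient (Ham g) x) =
      toEuclideanLin (hess11 g x) (inlPart (gradient g x)) +
        toEuclideanLin (hess12 g x) (inrPart (gradient g x)) := by
  ext a
  simp [inlPart, inrPart, gradient_ham_apply hg, Fintype.sum_sum_type,
    mulVec, dotProduct, hess11, hess12]

theorem inrPart_gradient_ham (hg : ContDiffAt ℝ 2 g x) :
    inrPart (gradient (Ham g) x) =
      toEuclideanLin (hess12 g x)ᵀ (inlPart (gradient g x)) +
        toEuclideanLin (hess22 g x) (inrPart (gradient g x)) := by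
  ext j
  simp [inlPart, inrPart, gradient_ham_apply hg, Fintype.sum_sum_type,
    mulVec, dotProduct, hess12, hess22, hessEntry_comm hg (Sum.inr j) (Sum.inl _)]

end Hamiltonian

theorem sufficiently_bilinear_PL_general
    (g : EuclideanSpace ℝ (Fin d ⊕ Fin d) → ℝ) (hg : ContDiff ℝ 2 g)
    (δ Δ L ρ β : ℝ) (hδ : 0 < δ) (hρ : 0 ≤ ρ) (hβ : 0 ≤ β)
    -- all singular values of the cross block lie in [δ, Δ]
    (hCross : ∀ x (v : EuclideanSpace ℝ (Fin d)),
      δ * ‖v‖ ≤ ‖Matrix.toEuclideanLin (hess12 g x) v‖ ∧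
      ‖Matrix.toEuclideanLin (hess12 g x) v‖ ≤ Δ * ‖v‖)
    -- spectral norms of the diagonal blocks are at most L
    (h11L : ∀ x (v : EuclideanSpace ℝ (Fin d)),
      ‖Matrix.toEuclideanLin (hess11 g x) v‖ ≤ L * ‖v‖)
    (h22L : ∀ x (v : EuclideanSpace ℝ (Fin d)),
      ‖Matrix.toEuclideanLin (hess22 g x) v‖ ≤ L * ‖v‖)
    -- λ_min((∇²_{x1,x1} g)²) ≥ ρ² and λ_min((∇²_{x2,x2} g)²) ≥ β²
    (h11ρ : ∀ x (v : EuclideanSpace ℝ (Fin d)),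
      ρ * ‖v‖ ≤ ‖Matrix.toEuclideanLin (hess11 g x) v‖)
    (h22β : ∀ x (v : EuclideanSpace ℝ (Fin d)),
      β * ‖v‖ ≤ ‖Matrix.toEuclideanLin (hess22 g x) v‖) :
    ∀ x, ((δ ^ 2 + ρ ^ 2) * (δ ^ 2 + β ^ 2) - 4 * L ^ 2 * Δ ^ 2)
        / (2 * δ ^ 2 + ρ ^ 2 + β ^ 2) * Ham g x
      ≤ (1 / 2 : ℝ) * ‖gradient (Ham g) x‖ ^ 2 := by
  intro x
  set u := inlPart (gradient g x)
  set v := inrPart (gradient g x)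
  have hX : (ρ * ‖u‖) ^ 2 + (δ * ‖v‖) ^ 2 - 2 * (L * ‖u‖) * (Δ * ‖v‖) ≤
      ‖inlPart (gradient (Ham g) x)‖ ^ 2 := by
    rw [inlPart_gradient_ham hg.contDiffAt]
    exact sq_add_sq_sub_two_mul_le_norm_add_sq (by positivity) (by positivity) (h11ρ x u)
      (h11L x u) (hCross x v).1 (hCross x v).2
  have hY : (δ * ‖u‖) ^ 2 + (β * ‖v‖) ^ 2 - 2 * (Δ * ‖u‖) * (L * ‖v‖) ≤
      ‖inrPart (gradient (Ham g) x)‖ ^ 2 := by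
    rw [inrPart_gradient_ham hg.contDiffAt, toEuclideanLin_transpose]
    exact sq_add_sq_sub_two_mul_le_norm_add_sq (by positivity) (by positivity)
      (LinearMap.le_norm_adjoint_apply hδ (fun w => (hCross x w).1) u)
      (LinearMap.norm_adjoint_apply_le (fun w => (hCross x w).2) u) (h22β x v) (h22L x v)
  have hμ := div_mul_sq_add_sq_le (a := δ ^ 2 + ρ ^ 2) (b := δ ^ 2 + β ^ 2) (c := 2 * L * Δ)
    (by positivity) ‖u‖ ‖v‖
  rw [show (δ ^ 2 + ρ ^ 2) + (δ ^ 2 + β ^ 2) = 2 * δ ^ 2 + ρ ^ 2 + β ^ 2 by ring,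
    show (2 * L * Δ) ^ 2 = 4 * L ^ 2 * Δ ^ 2 by ring] at hμ
  rw [Ham, sq_norm_xi, sq_norm_eq_inlPart_add_inrPart, sq_norm_eq_inlPart_add_inrPart]
  linear_combination (1 / 2 : ℝ) * (hμ + hX + hY)

theorem sufficiently_bilinear_PL
    (g : EuclideanSpace ℝ (Fin d ⊕ Fin d) → ℝ) (hg : ContDiff ℝ 2 g)
    (δ Δ L ρ β : ℝ) (hδ : 0 < δ) (hΔ : 0 < Δ) (hL : 0 < L) (hρ : 0 ≤ ρ) (hβ : 0 ≤ β)
    -- all singular values of the cross block lie in [δ, Δ]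
    (hCross : ∀ x (v : EuclideanSpace ℝ (Fin d)),
      δ * ‖v‖ ≤ ‖Matrix.toEuclideanLin (hess12 g x) v‖ ∧
      ‖Matrix.toEuclideanLin (hess12 g x) v‖ ≤ Δ * ‖v‖)
    -- spectral norms of the diagonal blocks are at most L
    (h11L : ∀ x (v : EuclideanSpace ℝ (Fin d)),
      ‖Matrix.toEuclideanLin (hess11 g x) v‖ ≤ L * ‖v‖)
    (h22L : ∀ x (v : EuclideanSpace ℝ (Fin d)),
      ‖Matrix.toEuclideanLin (hess22 g x) v‖ ≤ L * ‖v‖)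
    -- λ_min((∇²_{x1,x1} g)²) ≥ ρ² and λ_min((∇²_{x2,x2} g)²) ≥ β²
    (h11ρ : ∀ x (v : EuclideanSpace ℝ (Fin d)),
      ρ * ‖v‖ ≤ ‖Matrix.toEuclideanLin (hess11 g x) v‖)
    (h22β : ∀ x (v : EuclideanSpace ℝ (Fin d)),
      β * ‖v‖ ≤ ‖Matrix.toEuclideanLin (hess22 g x) v‖)
    -- the "sufficiently bilinear" condition
    (hsuff : (δ ^ 2 + ρ ^ 2) * (δ ^ 2 + β ^ 2) - 4 * L ^ 2 * Δ ^ 2 > 0) :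
    ∀ x, ((δ ^ 2 + ρ ^ 2) * (δ ^ 2 + β ^ 2) - 4 * L ^ 2 * Δ ^ 2)
        / (2 * δ ^ 2 + ρ ^ 2 + β ^ 2) * Ham g x
      ≤ (1 / 2 : ℝ) * ‖gradient (Ham g) x‖ ^ 2 :=
  sufficiently_bilinear_PL_general g hg δ Δ L ρ β hδ hρ hβ hCross h11L h22L h11ρ h22β

end
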